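/- arXiv:1604.06859 — 3 statements merged into one kernel-verified Lean document; each statement's English description precedes it below -/
import Mathlib

section
/- Let p be the transition kernel of a random walk on a connected finite graph G = (V,E) (transitions only between neighbors or self-loops), equipped with the graph distance d. If (V,p,d) has coarse Ricci curvature at least 1/α > 0, then the stationary measure π satisfies W₁(μ,π)² ≤ (2α/(2−1/α))·H(μ‖π) for every probability measure μ on V. -/
open scoped BigOperators

noncomputable section

/-- A probability mass function on a (countable) space. -/
def IsProb {Ω : Type*} (μ : Ω → ℝ) : Prop :=
  (∀ x, 0 ≤ μ x) ∧ HasSum μ 1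

/-- A coupling of two probability mass functions. -/
def IsCoupling {Ω : Type*} (γ : Ω × Ω → ℝ) (μ ν : Ω → ℝ) : Prop :=
  (∀ z, 0 ≤ γ z) ∧ (∀ x, HasSum (fun y => γ (x, y)) (μ x)) ∧
    (∀ y, HasSum (fun x => γ (x, y)) (ν y))

/-- Wasserstein 1-distance with cost `d`: infimum of the expected cost over couplings. -/
def W1 {Ω : Type*} (d : Ω → Ω → ℝ) (μ ν : Ω → ℝ) : ℝ :=
  sInf { r | ∃ γ, IsCoupling γ μ ν ∧ HasSum (fun z : Ω × Ω => γ z * d z.1 z.2) r }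

/-- Relative entropy (Kullback divergence) `H(ν‖μ)` on a countable space. -/
def relent {Ω : Type*} (ν μ : Ω → ℝ) : ℝ :=
  ∑' x, ν x * Real.log (ν x / μ x)

/-- Absolute continuity of pmfs. -/
def AC {Ω : Type*} (ν μ : Ω → ℝ) : Prop := ∀ x, ν x ≠ 0 → μ x ≠ 0

/-- `f` is `L`-Lipschitz with respect to the cost `d`. -/
def LipWith {Ω : Type*} (d : Ω → Ω → ℝ) (L : ℝ) (f : Ω → ℝ) : Prop :=
  ∀ x y, |f x - f y| ≤ L * d x y

/-- The Lipschitz seminorm `‖f‖_Lip` (least Lipschitz constant). -/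
def lipNorm {Ω : Type*} (d : Ω → Ω → ℝ) (f : Ω → ℝ) : ℝ :=
  sInf { L | 0 ≤ L ∧ LipWith d L f }


/-!
Bobkov–Götze: by the Gibbs variational principle and Kantorovich duality,
`W₁(μ,π)² ≤ 2C·H(μ‖π)` follows once every 1-Lipschitz `f` has `E_π e^{t(f - E_π f)} ≤ e^{t²C/2}`.
To get this Laplace bound, let `P` be the Markov operator. Curvature `1/α` means that `P`
multiplies Lipschitz constants by `r = 1 - 1/α`, and since one step moves at distance at most one,
Hoeffding's lemma gives `P e^{tg} ≤ e^{t Pg + t²L²/2}` for `L`-Lipschitz `g`. Iterating,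
`E_π e^{tf} = E_π Pⁿ e^{tf}` is at most `E_π exp(t Pⁿf + (t²/2) Σ_{k<n} r^{2k})`, and `Pⁿf → E_π f`
uniformly; so `C = 1/(1 - r²) = α/(2 - 1/α)`.
-/

open Real (exp log)

theorem IsProb.sum_eq_one {Ω : Type*} [Fintype Ω] {μ : Ω → ℝ} (h : IsProb μ) : ∑ x, μ x = 1 :=
  (hasSum_fintype μ).unique h.2

structure IsPseudoDist {Ω : Type*} (d : Ω → Ω → ℝ) : Prop where
  self : ∀ x, d x x = 0
  symm : ∀ x y, d x y = d y x
  triangle : ∀ x y z, d x z ≤ d x y + d y z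

theorem IsPseudoDist.nonneg {Ω : Type*} {d : Ω → Ω → ℝ} (hd : IsPseudoDist d) (x y : Ω) :
    0 ≤ d x y := by
  linarith [hd.triangle x y x, hd.self x, hd.symm x y]

section Coupling

variable {V : Type*} {d : V → V → ℝ} {μ ν : V → ℝ} {γ : V × V → ℝ}

theorem isCoupling_prod (hμ : IsProb μ) (hν : IsProb ν) :
    IsCoupling (fun z => μ z.1 * ν z.2) μ ν :=
  ⟨fun z => mul_nonneg (hμ.1 z.1) (hν.1 z.2), fun x => by simpa using hν.2.mul_left (μ x),
    fun y => by simpa using hμ.2.mul_right (ν y)⟩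

variable [Fintype V]

theorem IsCoupling.sum_fst (hγ : IsCoupling γ μ ν) (x : V) : ∑ y, γ (x, y) = μ x :=
  (hasSum_fintype _).unique (hγ.2.1 x)

theorem IsCoupling.sum_snd (hγ : IsCoupling γ μ ν) (y : V) : ∑ x, γ (x, y) = ν y :=
  (hasSum_fintype _).unique (hγ.2.2 y)

theorem IsCoupling.sum_mul_fst (hγ : IsCoupling γ μ ν) (f : V → ℝ) :
    ∑ z, γ z * f z.1 = ∑ x, μ x * f x := by
  simp only [Fintype.sum_prod_type, ← Finset.sum_mul, hγ.sum_fst]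

theorem IsCoupling.sum_mul_snd (hγ : IsCoupling γ μ ν) (f : V → ℝ) :
    ∑ z, γ z * f z.2 = ∑ y, ν y * f y := by
  simp only [Fintype.sum_prod_type_right, ← Finset.sum_mul, hγ.sum_snd]

theorem W1_le_cost (hd : ∀ x y, 0 ≤ d x y) (hγ : IsCoupling γ μ ν) :
    W1 d μ ν ≤ ∑ z, γ z * d z.1 z.2 := by
  refine csInf_le ⟨0, ?_⟩ ⟨γ, hγ, hasSum_fintype _⟩
  rintro r ⟨γ', hγ', hr⟩
  rw [← (hasSum_fintype _).unique hr]
  exact Finset.sum_nonneg fun z _ => mul_nonneg (hγ'.1 z) (hd z.1 z.2)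

theorem le_W1 (hμ : IsProb μ) (hν : IsProb ν) {b : ℝ}
    (h : ∀ γ, IsCoupling γ μ ν → b ≤ ∑ z, γ z * d z.1 z.2) : b ≤ W1 d μ ν := by
  refine le_csInf ⟨_, _, isCoupling_prod hμ hν, hasSum_fintype _⟩ ?_
  rintro r ⟨γ, hγ, hr⟩
  exact (hasSum_fintype _).unique hr ▸ h γ hγ

theorem sum_sub_sum_le_mul_W1 (hμ : IsProb μ) (hν : IsProb ν) {f : V → ℝ} {L : ℝ} (hL : 0 ≤ L)
    (hf : LipWith d L f) : ∑ x, μ x * f x - ∑ x, ν x * f x ≤ L * W1 d μ ν := by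
  have hcoupling : ∀ γ, IsCoupling γ μ ν →
      ∑ x, μ x * f x - ∑ x, ν x * f x ≤ L * ∑ z, γ z * d z.1 z.2 := by
    intro γ hγ
    rw [← hγ.sum_mul_fst, ← hγ.sum_mul_snd, ← Finset.sum_sub_distrib, Finset.mul_sum]
    refine Finset.sum_le_sum fun z _ => ?_
    have := (le_abs_self _).trans (hf z.1 z.2)
    nlinarith [hγ.1 z]
  rcases hL.eq_or_lt with rfl | hL
  · simpa using hcoupling _ (isCoupling_prod hμ hν)
  · rw [← div_le_iff₀' hL]
    exact le_W1 hμ hν fun γ hγ => (div_le_iff₀' hL).2 (hcoupling γ hγ)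

theorem W1_nonneg (hd : ∀ x y, 0 ≤ d x y) (hμ : IsProb μ) (hν : IsProb ν) : 0 ≤ W1 d μ ν :=
  le_W1 hμ hν fun _ hγ => Finset.sum_nonneg fun z _ => mul_nonneg (hγ.1 z) (hd z.1 z.2)

variable (d) in
def marginalsCost : (V × V → ℝ) →ₗ[ℝ] (V → ℝ) × (V → ℝ) × ℝ where
  toFun γ := (fun x => ∑ y, γ (x, y), fun y => ∑ x, γ (x, y), ∑ z, γ z * d z.1 z.2)
  map_add' γ γ' := by ext <;> simp [Finset.sum_add_distrib, add_mul]
  map_smul' c γ := by ext <;> simp [Finset.mul_sum, mul_assoc]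

theorem dual_apply_eq_sum [DecidableEq V] (f : StrongDual ℝ ((V → ℝ) × (V → ℝ) × ℝ))
    (a b : V → ℝ) (c : ℝ) :
    f (a, b, c) = ∑ x, a x * f (Pi.single x 1, 0, 0) + ∑ y, b y * f (0, Pi.single y 1, 0)
      + c * f (0, 0, 1) := by
  have : (a, b, c) = ∑ x, a x • ((Pi.single x 1 : V → ℝ), (0 : V → ℝ), (0 : ℝ))
      + ∑ y, b y • ((0 : V → ℝ), (Pi.single y 1 : V → ℝ), (0 : ℝ)) + c • (0, 0, 1) := by
    ext <;> simp [Prod.fst_sum, Prod.snd_sum, Pi.single_apply]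
  conv_lhs => rw [this]
  simp only [map_add, map_sum, map_smul, smul_eq_mul]

theorem marginalsCost_single [DecidableEq V] (x y : V) :
    marginalsCost d (Pi.single (x, y) 1) = (Pi.single x 1, Pi.single y 1, d x y) := by
  ext <;> simp [marginalsCost, Pi.single_apply, Prod.ext_iff, ite_and, Finset.sum_ite_irrel,
    Fintype.sum_prod_type]

theorem IsCoupling.marginalsCost_eq (hγ : IsCoupling γ μ ν) :
    marginalsCost d γ = (μ, ν, ∑ z, γ z * d z.1 z.2) :=
  Prod.ext (funext hγ.sum_fst) (Prod.ext (funext hγ.sum_snd) rfl)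

theorem IsCoupling.mem_stdSimplex (hγ : IsCoupling γ μ ν) (hμ : IsProb μ) :
    γ ∈ stdSimplex ℝ (V × V) :=
  ⟨hγ.1, by simp only [Fintype.sum_prod_type, hγ.sum_fst, hμ.sum_eq_one]⟩

theorem exists_potentials_of_lt_W1 (hd : ∀ x y, 0 ≤ d x y) (hμ : IsProb μ) (hν : IsProb ν)
    {B : ℝ} (hB : B < W1 d μ ν) :
    ∃ φ ψ : V → ℝ, (∀ x y, φ x + ψ y ≤ d x y) ∧ B < ∑ x, μ x * φ x + ∑ y, ν y * ψ y := by
  classical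
  have hdisj : Disjoint (marginalsCost d '' stdSimplex ℝ (V × V)) ({μ} ×ˢ {ν} ×ˢ Set.Iic B) := by
    refine Set.disjoint_left.2 ?_
    rintro _ ⟨γ, hγ, rfl⟩ ⟨hγμ, hγν, hcost⟩
    have hcoupling : IsCoupling γ μ ν :=
      ⟨hγ.1, fun x => congrFun hγμ x ▸ hasSum_fintype _, fun y => congrFun hγν y ▸ hasSum_fintype _⟩
    exact hB.not_ge ((W1_le_cost hd hcoupling).trans hcost)
  obtain ⟨f, u, v, hfu, huv, hvf⟩ := geometric_hahn_banach_compact_closed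
    ((convex_stdSimplex ℝ _).linear_image _)
    ((isCompact_stdSimplex ℝ (V × V)).image (marginalsCost d).continuous_of_finiteDimensional)
    ((convex_singleton μ).prod ((convex_singleton ν).prod (convex_Iic B)))
    (isClosed_singleton.prod (isClosed_singleton.prod isClosed_Iic)) hdisj
  set φ : V → ℝ := fun x => f (Pi.single x 1, 0, 0)
  set ψ : V → ℝ := fun y => f (0, Pi.single y 1, 0)
  set β := f (0, 0, 1)
  have hpoint : ∀ x y, φ x + ψ y + d x y * β < u := by
    intro x y
    have := hfu _ ⟨_, single_mem_stdSimplex ℝ (x, y), rfl⟩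
    rw [marginalsCost_single, dual_apply_eq_sum] at this
    simpa [Pi.single_apply] using this
  have hprod := isCoupling_prod hμ hν
  set c := ∑ z : V × V, μ z.1 * ν z.2 * d z.1 z.2
  have hprod_lt : f (μ, ν, c) < u :=
    hprod.marginalsCost_eq ▸ hfu _ ⟨_, hprod.mem_stdSimplex hμ, rfl⟩
  -- for `β ≥ 0`, the product plan would beat the point `(μ, ν, min B c)` of the half-line
  have hβ : β < 0 := by
    by_contra! hβ
    have hv := hvf (μ, ν, min B c) ⟨rfl, rfl, Set.mem_Iic.2 (min_le_left _ _)⟩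
    rw [dual_apply_eq_sum] at hv hprod_lt
    nlinarith [mul_le_mul_of_nonneg_right (min_le_right B c) hβ]
  refine ⟨fun x => (φ x - u) / -β, fun y => ψ y / -β, fun x y => ?_, ?_⟩
  · rw [← add_div, div_le_iff₀ (neg_pos.2 hβ)]
    linarith [hpoint x y]
  · have hv := hvf (μ, ν, B) ⟨rfl, rfl, Set.mem_Iic.2 le_rfl⟩
    rw [dual_apply_eq_sum] at hv
    simp_rw [mul_div_assoc', ← Finset.sum_div, mul_sub, Finset.sum_sub_distrib, ← Finset.sum_mul,
      hμ.sum_eq_one, ← add_div, lt_div_iff₀ (neg_pos.2 hβ)]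
    linarith

theorem exists_lipWith_of_potentials [Nonempty V] (hd : IsPseudoDist d) {φ ψ : V → ℝ}
    (h : ∀ x y, φ x + ψ y ≤ d x y) :
    ∃ F, LipWith d 1 F ∧ (∀ x, φ x ≤ F x) ∧ ∀ y, F y ≤ -ψ y := by
  set F : V → ℝ := fun x => Finset.univ.inf' Finset.univ_nonempty fun y => d x y - ψ y
  have hF_le : ∀ x y, F x ≤ d x y - ψ y := fun x y => Finset.inf'_le _ (Finset.mem_univ y)
  have hF_sub_le : ∀ x x', F x - F x' ≤ d x x' := by
    intro x x'
    obtain ⟨y, -, hy⟩ := Finset.exists_mem_eq_inf' Finset.univ_nonempty fun y => d x' y - ψ y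
    linarith [hF_le x y, hd.triangle x x' y, show F x' = d x' y - ψ y from hy]
  refine ⟨F, fun x x' => ?_, fun x => Finset.le_inf' _ _ fun y _ => ?_, fun y => ?_⟩
  · rw [one_mul, abs_sub_le_iff]
    exact ⟨hF_sub_le x x', hd.symm x x' ▸ hF_sub_le x' x⟩
  · linarith [h x y]
  · linarith [hF_le y y, hd.self y]

theorem W1_le_of_forall_lipWith (hd : IsPseudoDist d) (hμ : IsProb μ) (hν : IsProb ν) {B : ℝ}
    (hB : ∀ f, LipWith d 1 f → ∑ x, μ x * f x - ∑ x, ν x * f x ≤ B) : W1 d μ ν ≤ B := by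
  by_contra! hlt
  obtain ⟨φ, ψ, hφψ, hB_lt⟩ := exists_potentials_of_lt_W1 hd.nonneg hμ hν hlt
  have : Nonempty V := by
    by_contra! hV
    simpa [hV] using hμ.sum_eq_one
  obtain ⟨F, hF, hφF, hFψ⟩ := exists_lipWith_of_potentials hd hφψ
  have hμF : ∑ x, μ x * φ x ≤ ∑ x, μ x * F x :=
    Finset.sum_le_sum fun x _ => mul_le_mul_of_nonneg_left (hφF x) (hμ.1 x)
  have hνF : ∑ y, ν y * F y ≤ ∑ y, ν y * -ψ y :=
    Finset.sum_le_sum fun y _ => mul_le_mul_of_nonneg_left (hFψ y) (hν.1 y)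
  simp only [mul_neg, Finset.sum_neg_distrib] at hνF
  linarith [hB F hF]

end Coupling

theorem le_sqrt_of_forall_mul_le {Δ H C : ℝ} (hC : 0 < C) (h : ∀ t, t * Δ ≤ H + t ^ 2 * C / 2) :
    Δ ≤ √(2 * C * H) := by
  rcases le_or_gt Δ 0 with hΔ | hΔ
  · exact hΔ.trans (Real.sqrt_nonneg _)
  have := h (Δ / C)
  refine Real.le_sqrt_of_sq_le ?_
  field_simp at this
  nlinarith

section Entropy

variable {V : Type*} [Fintype V] {d : V → V → ℝ} {μ π : V → ℝ}

theorem IsProb.sum_mul_exp_pos (hπ : IsProb π) (g : V → ℝ) : 0 < ∑ x, π x * exp (g x) := by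
  obtain ⟨x, -, hx⟩ := Finset.exists_ne_zero_of_sum_ne_zero (hπ.sum_eq_one.trans_ne one_ne_zero)
  exact Finset.sum_pos' (fun y _ => mul_nonneg (hπ.1 y) (Real.exp_pos _).le)
    ⟨x, Finset.mem_univ x, mul_pos ((hπ.1 x).lt_of_ne' hx) (Real.exp_pos _)⟩

theorem sum_mul_le_relent_add_log (hμ : IsProb μ) (hπ : IsProb π) (hac : AC μ π) (g : V → ℝ) :
    ∑ x, μ x * g x ≤ relent μ π + log (∑ x, π x * exp (g x)) := by
  set Z := ∑ x, π x * exp (g x)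
  have hZ : 0 < Z := hπ.sum_mul_exp_pos g
  -- termwise `log y ≤ y - 1` at `y = π x * exp (g x) / (Z * μ x)`
  have key : ∀ x, μ x * (g x - log (μ x / π x) - log Z) ≤ π x * exp (g x) / Z - μ x := by
    intro x
    rcases (hμ.1 x).eq_or_lt with hx | hx
    · rw [← hx]
      simp only [zero_mul, sub_zero]
      exact div_nonneg (mul_nonneg (hπ.1 x) (Real.exp_pos _).le) hZ.le
    have hπx : 0 < π x := (hπ.1 x).lt_of_ne' (hac x hx.ne')
    have hlog := Real.log_le_sub_one_of_pos (x := π x * exp (g x) / (Z * μ x)) (by positivity)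
    rw [Real.log_div (by positivity) (by positivity), Real.log_mul hπx.ne' (Real.exp_pos _).ne',
      Real.log_exp, Real.log_mul hZ.ne' hx.ne'] at hlog
    rw [Real.log_div hx.ne' hπx.ne']
    have := mul_le_mul_of_nonneg_left hlog hx.le
    field_simp at this ⊢
    linarith
  have hsum := Finset.sum_le_sum fun x (_ : x ∈ Finset.univ) => key x
  rw [Finset.sum_sub_distrib, ← Finset.sum_div, div_self hZ.ne', hμ.sum_eq_one] at hsum
  simp only [mul_sub, Finset.sum_sub_distrib, ← Finset.sum_mul, hμ.sum_eq_one] at hsum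
  rw [relent, tsum_fintype]
  linarith

theorem relent_nonneg (hμ : IsProb μ) (hπ : IsProb π) (hac : AC μ π) : 0 ≤ relent μ π := by
  simpa [hπ.sum_eq_one] using sum_mul_le_relent_add_log hμ hπ hac 0

variable (d π) in
def IsLipSubgaussian (C : ℝ) : Prop :=
  ∀ f, LipWith d 1 f → ∀ t, ∑ x, π x * exp (t * f x) ≤ exp (t * ∑ x, π x * f x + t ^ 2 * C / 2)

theorem IsLipSubgaussian.W1_sq_le {C : ℝ} (h : IsLipSubgaussian d π C) (hd : IsPseudoDist d)
    (hπ : IsProb π) (hC : 0 < C) (hμ : IsProb μ) (hac : AC μ π) :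
    W1 d μ π ^ 2 ≤ 2 * C * relent μ π := by
  have hW : W1 d μ π ≤ √(2 * C * relent μ π) := by
    refine W1_le_of_forall_lipWith hd hμ hπ fun f hf => le_sqrt_of_forall_mul_le hC fun t => ?_
    have hgibbs := sum_mul_le_relent_add_log hμ hπ hac fun x => t * f x
    have hlog := Real.log_le_log (hπ.sum_mul_exp_pos _) (h f hf t)
    rw [Real.log_exp] at hlog
    simp only [mul_left_comm _ t, ← Finset.mul_sum] at hgibbs hlog
    linarith
  calc W1 d μ π ^ 2 ≤ √(2 * C * relent μ π) ^ 2 :=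
        pow_le_pow_left₀ (W1_nonneg hd.nonneg hμ hπ) hW 2
    _ = 2 * C * relent μ π := Real.sq_sqrt (by have := relent_nonneg hμ hπ hac; positivity)

end Entropy

section Hoeffding

open MeasureTheory ProbabilityTheory

theorem sum_mul_exp_le_of_mem_Icc {ι : Type*} [Fintype ι] {w g : ι → ℝ} (hw : IsProb w)
    {a b : ℝ} (hg : ∀ i, w i ≠ 0 → g i ∈ Set.Icc a b) (t : ℝ) :
    ∑ i, w i * exp (t * g i) ≤ exp (t * ∑ i, w i * g i + (b - a) ^ 2 / 8 * t ^ 2) := by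
  set ν : Measure ℝ := ∑ i, ENNReal.ofReal (w i) • Measure.dirac (g i)
  have integral_ν (h : ℝ → ℝ) : ∫ y, h y ∂ν = ∑ i, w i * h (g i) := by
    rw [integral_finsetSum_measure fun i _ => (integrable_dirac enorm_lt_top).smul_measure
      ENNReal.ofReal_ne_top]
    simp [integral_smul_measure, ENNReal.toReal_ofReal (hw.1 _)]
  have : IsProbabilityMeasure ν := by
    constructor
    simp [ν, ← ENNReal.ofReal_sum_of_nonneg fun i _ => hw.1 i, hw.sum_eq_one]
  have hae : ∀ᵐ y ∂ν, y ∈ Set.Icc a b := by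
    rw [ae_iff, Measure.coe_finsetSum, Finset.sum_apply, Finset.sum_eq_zero_iff]
    intro i _
    by_cases hi : w i = 0
    · simp [hi]
    · simp [(hg i hi).1, (hg i hi).2]
  have hmgf := (hasSubgaussianMGF_of_mem_Icc aemeasurable_id hae).mgf_le t
  simp only [mgf, integral_ν, id] at hmgf
  set m := ∑ i, w i * g i
  have hc : (((‖b - a‖₊ / 2) ^ 2 : NNReal) : ℝ) = (b - a) ^ 2 / 4 := by
    simp only [NNReal.coe_pow, NNReal.coe_div, coe_nnnorm, Real.norm_eq_abs, div_pow, sq_abs]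
    norm_num
  rw [hc] at hmgf
  calc ∑ i, w i * exp (t * g i) = exp (t * m) * ∑ i, w i * exp (t * (g i - m)) := by
        rw [Finset.mul_sum]
        refine Finset.sum_congr rfl fun i _ => ?_
        rw [mul_left_comm, ← Real.exp_add]; ring_nf
    _ ≤ exp (t * m) * exp ((b - a) ^ 2 / 4 * t ^ 2 / 2) := by gcongr
    _ = _ := by rw [← Real.exp_add]; ring_nf

end Hoeffding

section MarkovOperator

variable {V : Type*} [Fintype V] {p : V → V → ℝ} {π : V → ℝ} {d : V → V → ℝ} {r : ℝ}

def markovOp (p : V → V → ℝ) (f : V → ℝ) (x : V) : ℝ := ∑ z, p x z * f z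

theorem markovOp_mono (hp : ∀ x, IsProb (p x)) {f g : V → ℝ} (hfg : ∀ z, f z ≤ g z) (x : V) :
    markovOp p f x ≤ markovOp p g x :=
  Finset.sum_le_sum fun z _ => mul_le_mul_of_nonneg_left (hfg z) ((hp x).1 z)

theorem sum_mul_markovOp_iterate (hstat : ∀ y, HasSum (fun x => π x * p x y) (π y))
    (g : V → ℝ) (n : ℕ) : ∑ x, π x * (markovOp p)^[n] g x = ∑ x, π x * g x := by
  induction n with
  | zero => rfl
  | succ n ih =>
    rw [Function.iterate_succ_apply', ← ih]
    simp only [markovOp, Finset.mul_sum, ← mul_assoc]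
    rw [Finset.sum_comm]
    simp only [← Finset.sum_mul, (hasSum_fintype _).unique (hstat _)]

theorem lipWith_markovOp (hd : IsPseudoDist d) (hp : ∀ x, IsProb (p x))
    (hcurv : ∀ x y, W1 d (p x) (p y) ≤ r * d x y) {L : ℝ} (hL : 0 ≤ L) {f : V → ℝ}
    (hf : LipWith d L f) : LipWith d (r * L) (markovOp p f) := by
  have key : ∀ x y, markovOp p f x - markovOp p f y ≤ r * L * d x y := fun x y =>
    calc markovOp p f x - markovOp p f y ≤ L * W1 d (p x) (p y) :=
          sum_sub_sum_le_mul_W1 (hp x) (hp y) hL hf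
      _ ≤ L * (r * d x y) := mul_le_mul_of_nonneg_left (hcurv x y) hL
      _ = r * L * d x y := by ring
  intro x y
  rw [abs_sub_le_iff]
  exact ⟨key x y, hd.symm x y ▸ key y x⟩

theorem lipWith_markovOp_iterate (hd : IsPseudoDist d) (hp : ∀ x, IsProb (p x))
    (hcurv : ∀ x y, W1 d (p x) (p y) ≤ r * d x y) (hr : 0 ≤ r) {f : V → ℝ} (hf : LipWith d 1 f)
    (n : ℕ) : LipWith d (r ^ n) ((markovOp p)^[n] f) := by
  induction n with
  | zero => simpa using hf
  | succ n ih =>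
    rw [Function.iterate_succ_apply', pow_succ']
    exact lipWith_markovOp hd hp hcurv (pow_nonneg hr n) ih

theorem markovOp_exp_le (hd : IsPseudoDist d) (hp : ∀ x, IsProb (p x))
    (hjump : ∀ x z, p x z ≠ 0 → d x z ≤ 1) {L : ℝ} (hL : 0 ≤ L) {f : V → ℝ}
    (hf : LipWith d L f) (t : ℝ) (x : V) :
    markovOp p (fun z => exp (t * f z)) x ≤ exp (t * markovOp p f x + t ^ 2 * L ^ 2 / 2) := by
  have hrange : ∀ z, p x z ≠ 0 → f z ∈ Set.Icc (f x - L) (f x + L) := by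
    intro z hz
    have hdist : d z x ≤ 1 := hd.symm z x ▸ hjump x z hz
    have := abs_le.1 ((hf z x).trans (mul_le_of_le_one_right hL hdist))
    constructor <;> linarith [this.1, this.2]
  exact (sum_mul_exp_le_of_mem_Icc (hp x) hrange t).trans_eq (by rw [markovOp]; ring_nf)

theorem markovOp_iterate_exp_le (hd : IsPseudoDist d) (hp : ∀ x, IsProb (p x))
    (hjump : ∀ x z, p x z ≠ 0 → d x z ≤ 1) (hcurv : ∀ x y, W1 d (p x) (p y) ≤ r * d x y)
    (hr : 0 ≤ r) {f : V → ℝ} (hf : LipWith d 1 f) (t : ℝ) (n : ℕ) (x : V) :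
    (markovOp p)^[n] (fun z => exp (t * f z)) x ≤
      exp (t * (markovOp p)^[n] f x + t ^ 2 / 2 * ∑ k ∈ Finset.range n, (r ^ 2) ^ k) := by
  induction n generalizing x with
  | zero => simp
  | succ n ih =>
    set c := t ^ 2 / 2 * ∑ k ∈ Finset.range n, (r ^ 2) ^ k
    rw [Function.iterate_succ_apply', Function.iterate_succ_apply']
    calc markovOp p ((markovOp p)^[n] fun z => exp (t * f z)) x
        ≤ markovOp p (fun z => exp (t * (markovOp p)^[n] f z + c)) x := markovOp_mono hp ih x
      _ = exp c * markovOp p (fun z => exp (t * (markovOp p)^[n] f z)) x := by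
        simp only [markovOp, Real.exp_add, Finset.mul_sum]
        exact Finset.sum_congr rfl fun z _ => by ring
      _ ≤ exp c * exp (t * markovOp p ((markovOp p)^[n] f) x + t ^ 2 * (r ^ n) ^ 2 / 2) :=
        mul_le_mul_of_nonneg_left (markovOp_exp_le hd hp hjump (pow_nonneg hr n)
          (lipWith_markovOp_iterate hd hp hcurv hr hf n) t x) (Real.exp_pos c).le
      _ = _ := by
        rw [← Real.exp_add, Finset.sum_range_succ, ← pow_mul, ← pow_mul, mul_comm n]
        simp only [c]
        ring_nf

theorem abs_sub_sum_mul_le (hπ : IsProb π) {K D : ℝ} (hK : 0 ≤ K) (hD : ∀ x y, d x y ≤ D)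
    {g : V → ℝ} (hg : LipWith d K g) (x : V) : |g x - ∑ y, π y * g y| ≤ K * D := by
  have hsplit : g x - ∑ y, π y * g y = ∑ y, π y * (g x - g y) := by
    simp only [mul_sub, Finset.sum_sub_distrib, ← Finset.sum_mul, hπ.sum_eq_one, one_mul]
  calc |g x - ∑ y, π y * g y| ≤ ∑ y, |π y * (g x - g y)| :=
        hsplit ▸ Finset.abs_sum_le_sum_abs _ _
    _ ≤ ∑ y, π y * (K * D) := Finset.sum_le_sum fun y _ => by
        rw [abs_mul, abs_of_nonneg (hπ.1 y)]
        exact mul_le_mul_of_nonneg_left ((hg x y).trans (mul_le_mul_of_nonneg_left (hD x y) hK))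
          (hπ.1 y)
    _ = K * D := by rw [← Finset.sum_mul, hπ.sum_eq_one, one_mul]

theorem isLipSubgaussian_of_contraction (hd : IsPseudoDist d) (hp : ∀ x, IsProb (p x))
    (hjump : ∀ x z, p x z ≠ 0 → d x z ≤ 1) (hcurv : ∀ x y, W1 d (p x) (p y) ≤ r * d x y)
    (hπ : IsProb π) (hstat : ∀ y, HasSum (fun x => π x * p x y) (π y)) (hr0 : 0 ≤ r)
    (hr1 : r < 1) : IsLipSubgaussian d π (1 - r ^ 2)⁻¹ := by
  intro f hf t
  set m := ∑ x, π x * f x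
  set C := (1 - r ^ 2)⁻¹
  obtain ⟨D, hD⟩ := (Set.finite_range fun z : V × V => d z.1 z.2).bddAbove
  have hgeom : ∀ n, ∑ k ∈ Finset.range n, (r ^ 2) ^ k ≤ C := fun n => by
    have := geom_sum_Ico_le_of_lt_one (m := 0) (n := n) (sq_nonneg r) (by nlinarith)
    rwa [← Finset.range_eq_Ico, pow_zero, one_div] at this
  have hosc : ∀ n x, t * (markovOp p)^[n] f x ≤ t * m + |t| * (r ^ n * D) := by
    intro n x
    have h := abs_sub_sum_mul_le hπ (pow_nonneg hr0 n) (fun x y => hD ⟨(x, y), rfl⟩)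
      (lipWith_markovOp_iterate hd hp hcurv hr0 hf n) x
    rw [sum_mul_markovOp_iterate hstat] at h
    have := mul_le_mul_of_nonneg_left h (abs_nonneg t)
    rw [← abs_mul] at this
    linarith [le_abs_self (t * ((markovOp p)^[n] f x - m))]
  have hbound : ∀ n : ℕ,
      ∑ x, π x * exp (t * f x) ≤ exp (t * m + |t| * (r ^ n * D) + t ^ 2 * C / 2) := by
    intro n
    have hpoint : ∀ x, (markovOp p)^[n] (fun z => exp (t * f z)) x ≤
        exp (t * m + |t| * (r ^ n * D) + t ^ 2 * C / 2) := fun x => by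
      refine (markovOp_iterate_exp_le hd hp hjump hcurv hr0 hf t n x).trans (Real.exp_le_exp.2 ?_)
      have := mul_le_mul_of_nonneg_left (hgeom n) (sq_nonneg t)
      linarith [hosc n x]
    calc ∑ x, π x * exp (t * f x)
        = ∑ x, π x * (markovOp p)^[n] (fun z => exp (t * f z)) x :=
          (sum_mul_markovOp_iterate hstat _ n).symm
      _ ≤ ∑ x, π x * exp (t * m + |t| * (r ^ n * D) + t ^ 2 * C / 2) :=
          Finset.sum_le_sum fun x _ => mul_le_mul_of_nonneg_left (hpoint x) (hπ.1 x)
      _ = exp (t * m + |t| * (r ^ n * D) + t ^ 2 * C / 2) := by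
          rw [← Finset.sum_mul, hπ.sum_eq_one, one_mul]
  have hpow := tendsto_pow_atTop_nhds_zero_of_lt_one hr0 hr1
  have hlim := ((((hpow.mul_const D).const_mul |t|).const_add (t * m)).add_const
    (t ^ 2 * C / 2)).rexp
  simpa using ge_of_tendsto' hlim hbound

end MarkovOperator

theorem SimpleGraph.Connected.isPseudoDist_dist {V : Type*} {G : SimpleGraph V}
    (hG : G.Connected) : IsPseudoDist fun a b => (G.dist a b : ℝ) where
  self x := by simp
  symm x y := by rw [G.dist_comm]
  triangle x y z := by exact_mod_cast hG.dist_triangle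

theorem transport_entropy_graph_general {V : Type*} [Fintype V]
    (G : SimpleGraph V) (hG : G.Connected)
    (p : V → V → ℝ) (π : V → ℝ) (α : ℝ)
    (hp : ∀ x, IsProb (p x))
    (hedge : ∀ x y, p x y ≠ 0 → G.Adj x y ∨ x = y)
    (hα : 1 ≤ α)
    (hcurv : ∀ x y : V,
      W1 (fun a b => (G.dist a b : ℝ)) (p x) (p y) ≤ (1 - 1/α) * (G.dist x y : ℝ))
    (hπ : IsProb π)
    (hstat : ∀ y, HasSum (fun x => π x * p x y) (π y)) :
    ∀ μ : V → ℝ, IsProb μ → AC μ π →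
      (W1 (fun a b => (G.dist a b : ℝ)) μ π) ^ 2 ≤ (2 * α / (2 - 1/α)) * relent μ π := by
  intro μ hμ hac
  have hd := hG.isPseudoDist_dist
  have hjump : ∀ x z, p x z ≠ 0 → (G.dist x z : ℝ) ≤ 1 := fun x z hxz => by
    rcases hedge x z hxz with hadj | rfl
    · simp [SimpleGraph.dist_eq_one_iff_adj.2 hadj]
    · simp
  have hα₀ : 0 < α := by linarith
  have hr0 : 0 ≤ 1 - 1 / α := sub_nonneg.2 ((div_le_one hα₀).2 hα)
  have hr1 : 1 - 1 / α < 1 := sub_lt_self 1 (by positivity)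
  have hC : 2 * (1 - (1 - 1 / α) ^ 2)⁻¹ = 2 * α / (2 - 1 / α) := by
    field_simp
    ring
  rw [← hC]
  exact (isLipSubgaussian_of_contraction hd hp hjump hcurv hπ hstat hr0 hr1).W1_sq_le hd hπ
    (inv_pos.2 (by nlinarith)) hμ hac

/-- for a random walk on a connected finite graph (moving only along
edges or staying put) with coarse Ricci curvature at least `1/α` for the graph
distance, the stationary measure satisfies `W₁(μ,π)² ≤ (2α/(2−1/α))·H(μ‖π)`. -/
theorem transport_entropy_graph {V : Type*} [Fintype V] [DecidableEq V]
    (G : SimpleGraph V) (hG : G.Connected)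
    (p : V → V → ℝ) (π : V → ℝ) (α : ℝ)
    (hp : ∀ x, IsProb (p x))
    (hedge : ∀ x y, p x y ≠ 0 → G.Adj x y ∨ x = y)
    (hα : 1 ≤ α)
    (hcurv : ∀ x y : V,
      W1 (fun a b => (G.dist a b : ℝ)) (p x) (p y) ≤ (1 - 1/α) * (G.dist x y : ℝ))
    (hπ : IsProb π)
    (hstat : ∀ y, HasSum (fun x => π x * p x y) (π y)) :
    ∀ μ : V → ℝ, IsProb μ → AC μ π →
      (W1 (fun a b => (G.dist a b : ℝ)) μ π) ^ 2 ≤ (2 * α / (2 - 1/α)) * relent μ π :=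
  transport_entropy_graph_general G hG p π α hp hedge hα hcurv hπ hstat
end
end

section
/- (Föllmer drift representation.) Let {B_t}_{t=0}^T be a Markov chain on a countable space Ω with kernel p, B₀ = x₀, with T-step law μ_T, and assume μ_T(x) > 0 for every x in the support of a target measure ν. Let f = dν/dμ_T and define the time-inhomogeneous Markov chain {X_t}_{t=0}^T with X₀ = x₀ and transitions q_t(x,y) = p(x,y)·P_{T−t}f(y)/P_{T−t+1}f(x), where P_s f(x) = E[f(B_s)|B₀=x]. Then {X_t} is well-defined, and for all x₁,…,x_T ∈ Ω, P((X₁,…,X_T)=(x₁,…,x_T)) = P((B₁,…,B_T)=(x₁,…,x_T))·f(x_T). In particular X_T has law ν. -/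
open scoped BigOperators

noncomputable section

/-- Extend a finite path `ω : Fin (T+1) → Ω` to a function on `ℕ`. -/
def extPath {Ω : Type*} {T : ℕ} (ω : Fin (T + 1) → Ω) : ℕ → Ω :=
  fun n => if h : n < T + 1 then ω ⟨n, h⟩ else ω (Fin.last T)

/-- Path law of the Markov chain with kernel `p` started at `x₀`, on `Ω^{T+1}`. -/
def pathLawB {Ω : Type*} [DecidableEq Ω] (p : Ω → Ω → ℝ) (x₀ : Ω) (T : ℕ) :
    (Fin (T + 1) → Ω) → ℝ := fun ω =>
  (if ω 0 = x₀ then (1 : ℝ) else 0) *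
    ∏ t ∈ Finset.range T, p (extPath ω t) (extPath ω (t + 1))

/-- The `n`-step transition operator `P_n`. -/
def Pn {Ω : Type*} (p : Ω → Ω → ℝ) : ℕ → (Ω → ℝ) → Ω → ℝ
  | 0, f => f
  | n + 1, f => fun x => ∑' y, p x y * Pn p n f y

/-- `n`-step transition kernel `p^n(x,y)`. -/
def pPow {Ω : Type*} [DecidableEq Ω] (p : Ω → Ω → ℝ) : ℕ → Ω → Ω → ℝ
  | 0 => fun x y => if x = y then 1 else 0
  | n + 1 => fun x y => ∑' z, p x z * pPow p n z y

/-- The density `f = dν/dμ_T` where `μ_T = p^T(x₀,·)`. -/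
def follmerDens {Ω : Type*} [DecidableEq Ω] (p : Ω → Ω → ℝ) (ν : Ω → ℝ) (x₀ : Ω)
    (T : ℕ) : Ω → ℝ := fun y => ν y / pPow p T x₀ y

/-- The Föllmer drift transition probabilities
`q_t(x,y) = p(x,y)·P_{T−t}f(y)/P_{T−t+1}f(x)`. -/
def follmerQ {Ω : Type*} [DecidableEq Ω] (p : Ω → Ω → ℝ) (ν : Ω → ℝ) (x₀ : Ω)
    (T t : ℕ) (x y : Ω) : ℝ :=
  p x y * Pn p (T - t) (follmerDens p ν x₀ T) y / Pn p (T - t + 1) (follmerDens p ν x₀ T) x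

/-- Path law of the Föllmer drift process started at `x₀`. -/
def follmerPath {Ω : Type*} [DecidableEq Ω] (p : Ω → Ω → ℝ) (ν : Ω → ℝ) (x₀ : Ω)
    (T : ℕ) : (Fin (T + 1) → Ω) → ℝ := fun ω =>
  (if ω 0 = x₀ then (1 : ℝ) else 0) *
    ∏ t ∈ Finset.range T, follmerQ p ν x₀ T (t + 1) (extPath ω t) (extPath ω (t + 1))


/-! The path weight of `X` telescopes:
`∏ₜ q_{t+1}(x_t, x_{t+1}) = ∏ₜ p(x_t, x_{t+1}) · P_0 f(x_T) / P_T f(x₀)`, and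
`P_T f(x₀) = ∑_z p^T(x₀, z) f(z) = ∑_z ν(z) = 1`. Summing the path law of `B` over the paths
ending at `y` gives `p^T(x₀, y)`, whence `X_T ∼ ν`.

The real `tsum` is `0` on non-summable families, so the series are first evaluated in `ℝ≥0∞`
(`PnE`). There `P_T f(x₀) = 1` makes `P_{T-t} f` finite at every point that the chain reaches
with positive probability, and at such points the real operator `Pn` agrees with `PnE`. -/

open Finset
open scoped ENNReal

namespace Follmer

variable {Ω : Type*}

theorem hasSum_div_tsum {a : Ω → ℝ} (h : ∑' y, a y ≠ 0) :
    HasSum (fun y => a y / ∑' y, a y) 1 := by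
  have hs : Summable a := by
    by_contra hns
    exact h (tsum_eq_zero_of_not_summable hns)
  simpa only [div_self h] using hs.hasSum.div_const (∑' y, a y)

def PnE (pe : Ω → Ω → ℝ≥0∞) : ℕ → (Ω → ℝ≥0∞) → Ω → ℝ≥0∞
  | 0, g => g
  | n + 1, g => fun x => ∑' y, pe x y * PnE pe n g y

section ENNReal

variable (pe : Ω → Ω → ℝ≥0∞)

theorem PnE_le_one (hpe : ∀ x, ∑' y, pe x y = 1) {g : Ω → ℝ≥0∞} (hg : ∀ x, g x ≤ 1) :
    ∀ n x, PnE pe n g x ≤ 1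
  | 0, x => hg x
  | n + 1, x =>
    calc ∑' y, pe x y * PnE pe n g y ≤ ∑' y, pe x y * 1 :=
          ENNReal.tsum_le_tsum fun y => by gcongr; exact PnE_le_one hpe hg n y
      _ = 1 := by simp only [mul_one, hpe x]

theorem PnE_eq_tsum_mul [DecidableEq Ω] (g : Ω → ℝ≥0∞) :
    ∀ n x, PnE pe n g x = ∑' z, PnE pe n (fun w => if w = z then 1 else 0) x * g z
  | 0, x => by simp [PnE]
  | n + 1, x => by
    simp only [PnE, PnE_eq_tsum_mul g n, ← ENNReal.tsum_mul_left, ← ENNReal.tsum_mul_right]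
    rw [ENNReal.tsum_comm]
    simp only [mul_assoc]

theorem prod_mul_PnE_le (g : Ω → ℝ≥0∞) (k : ℕ) :
    ∀ (t : ℕ) (σ : ℕ → Ω),
      (∏ j ∈ range t, pe (σ j) (σ (j + 1))) * PnE pe k g (σ t) ≤ PnE pe (t + k) g (σ 0)
  | 0, σ => by simp
  | t + 1, σ =>
    calc (∏ j ∈ range (t + 1), pe (σ j) (σ (j + 1))) * PnE pe k g (σ (t + 1))
        = pe (σ 0) (σ 1) * ((∏ j ∈ range t, pe (σ (j + 1)) (σ (j + 1 + 1))) *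
            PnE pe k g (σ (t + 1))) := by rw [prod_range_succ']; ring
      _ ≤ pe (σ 0) (σ 1) * PnE pe (t + k) g (σ 1) := by
          gcongr; exact prod_mul_PnE_le g k t (fun j => σ (j + 1))
      _ ≤ PnE pe (t + 1 + k) g (σ 0) := by
          rw [Nat.add_right_comm]
          exact ENNReal.le_tsum (f := fun y => pe (σ 0) y * PnE pe (t + k) g y) (σ 1)

theorem PnE_ne_top_of_prod_ne_zero {g : Ω → ℝ≥0∞} {t k : ℕ} {σ : ℕ → Ω}
    (hσ : ∏ j ∈ range t, pe (σ j) (σ (j + 1)) ≠ 0) (h : PnE pe (t + k) g (σ 0) ≠ ∞) :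
    PnE pe k g (σ t) ≠ ∞ := by
  intro htop
  have := prod_mul_PnE_le pe g k t σ
  rw [htop, ENNReal.mul_top hσ, top_le_iff] at this
  exact h this

theorem tsum_ite_cons [DecidableEq Ω] {n : ℕ} (x : Ω) (F : (Fin (n + 1) → Ω) → ℝ≥0∞) :
    ∑' ω : Fin (n + 1) → Ω, (if ω 0 = x then F ω else 0) =
      ∑' τ : Fin n → Ω, F (Fin.cons x τ) := by
  rw [← (Fin.consEquiv fun _ : Fin (n + 1) => Ω).tsum_eq, ENNReal.tsum_prod',
    tsum_eq_single x fun z hz => by simp [Fin.consEquiv, hz]]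
  simp [Fin.consEquiv]

theorem tsum_prod_cons_mul (g : Ω → ℝ≥0∞) :
    ∀ (n : ℕ) (x : Ω), ∑' τ : Fin n → Ω,
      (∏ i : Fin n, pe ((Fin.cons x τ : Fin (n + 1) → Ω) i.castSucc)
        ((Fin.cons x τ : Fin (n + 1) → Ω) i.succ)) *
        g ((Fin.cons x τ : Fin (n + 1) → Ω) (Fin.last n)) = PnE pe n g x
  | 0, x => by simp [PnE]
  | n + 1, x => by
    rw [← (Fin.consEquiv fun _ => Ω).tsum_eq, ENNReal.tsum_prod']
    simp only [PnE, ← tsum_prod_cons_mul g n, ← ENNReal.tsum_mul_left]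
    refine tsum_congr fun z => tsum_congr fun τ => ?_
    simp [Fin.consEquiv, Fin.prod_univ_succ, mul_assoc]

theorem tsum_ite_prod_mul [DecidableEq Ω] (g : Ω → ℝ≥0∞) (n : ℕ) (x : Ω) :
    ∑' ω : Fin (n + 1) → Ω,
      (if ω 0 = x then (∏ i : Fin n, pe (ω i.castSucc) (ω i.succ)) * g (ω (Fin.last n)) else 0) =
    PnE pe n g x := by
  rw [tsum_ite_cons, tsum_prod_cons_mul]

end ENNReal

section Real

variable (p : Ω → Ω → ℝ)

theorem tsum_ofReal_eq_one {μ : Ω → ℝ} (hμ : IsProb μ) : ∑' y, ENNReal.ofReal (μ y) = 1 := by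
  rw [← ENNReal.ofReal_tsum_of_nonneg hμ.1 hμ.2.summable, hμ.2.tsum_eq, ENNReal.ofReal_one]

theorem mul_eq_toReal_ofReal_mul {a b : ℝ} {e : ℝ≥0∞} (ha : 0 ≤ a) (hb : e ≠ ∞ → b = e.toReal)
    (h : ENNReal.ofReal a * e ≠ ∞) : a * b = (ENNReal.ofReal a * e).toReal := by
  rcases ha.eq_or_lt with rfl | ha
  · simp
  · have he : e ≠ ∞ := fun he => h (by rw [he, ENNReal.mul_top (ENNReal.ofReal_pos.mpr ha).ne'])
    rw [ENNReal.toReal_mul, ENNReal.toReal_ofReal ha.le, hb he]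

theorem Pn_eq_toReal (hp0 : ∀ x y, 0 ≤ p x y) {g : Ω → ℝ} (hg : ∀ x, 0 ≤ g x) :
    ∀ n x, PnE (fun x y => ENNReal.ofReal (p x y)) n (fun x => ENNReal.ofReal (g x)) x ≠ ∞ →
      Pn p n g x =
        (PnE (fun x y => ENNReal.ofReal (p x y)) n (fun x => ENNReal.ofReal (g x)) x).toReal
  | 0, x, _ => (ENNReal.toReal_ofReal (hg x)).symm
  | n + 1, x, hfin => by
    have hterm : ∀ y, ENNReal.ofReal (p x y) *
        PnE (fun x y => ENNReal.ofReal (p x y)) n (fun x => ENNReal.ofReal (g x)) y ≠ ∞ :=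
      fun y => ne_top_of_le_ne_top hfin (ENNReal.le_tsum y)
    calc Pn p (n + 1) g x
        = ∑' y, (ENNReal.ofReal (p x y) *
            PnE (fun x y => ENNReal.ofReal (p x y)) n (fun x => ENNReal.ofReal (g x)) y).toReal :=
          tsum_congr fun y =>
            mul_eq_toReal_ofReal_mul (hp0 x y) (Pn_eq_toReal hp0 hg n y) (hterm y)
      _ = _ := (ENNReal.tsum_toReal_eq hterm).symm

theorem mul_Pn_eq_zero_of_Pn_succ_eq_zero (hp0 : ∀ x y, 0 ≤ p x y) {g : Ω → ℝ}
    (hg : ∀ x, 0 ≤ g x) {n : ℕ} {x : Ω}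
    (hfin : PnE (fun x y => ENNReal.ofReal (p x y)) (n + 1) (fun x => ENNReal.ofReal (g x)) x ≠ ∞)
    (h : Pn p (n + 1) g x = 0) (y : Ω) : p x y * Pn p n g y = 0 := by
  rw [Pn_eq_toReal p hp0 hg _ _ hfin, ENNReal.toReal_eq_zero_iff] at h
  have hy := ENNReal.tsum_eq_zero.mp (h.resolve_right hfin) y
  rw [mul_eq_toReal_ofReal_mul (hp0 x y) (Pn_eq_toReal p hp0 hg n y) (by simp [hy]), hy,
    ENNReal.toReal_zero]

theorem pPow_eq_Pn [DecidableEq Ω] (y : Ω) :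
    ∀ n x, pPow p n x y = Pn p n (fun w => if w = y then 1 else 0) x
  | 0, _ => rfl
  | n + 1, x => by simp only [pPow, Pn, pPow_eq_Pn y n]

theorem PnE_indicator_ne_top [DecidableEq Ω] (hp : ∀ x, IsProb (p x)) (n : ℕ) (x y : Ω) :
    PnE (fun x y => ENNReal.ofReal (p x y)) n (fun w => if w = y then 1 else 0) x ≠ ∞ := by
  refine ne_top_of_le_ne_top ENNReal.one_ne_top
    (PnE_le_one _ (fun x => tsum_ofReal_eq_one (hp x)) (fun w => ?_) n x)
  split_ifs <;> simp

theorem pPow_eq_toReal [DecidableEq Ω] (hp : ∀ x, IsProb (p x)) (n : ℕ) (x y : Ω) :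
    pPow p n x y =
      (PnE (fun x y => ENNReal.ofReal (p x y)) n (fun w => if w = y then 1 else 0) x).toReal := by
  have hδ : (fun w => if w = y then (1 : ℝ≥0∞) else 0) =
      fun w => ENNReal.ofReal (if w = y then 1 else 0) := by
    funext w; split_ifs <;> simp
  rw [pPow_eq_Pn, Pn_eq_toReal p (fun x => (hp x).1) (fun w => by positivity) n x, hδ]
  exact hδ ▸ PnE_indicator_ne_top p hp n x y

theorem pPow_nonneg [DecidableEq Ω] (hp : ∀ x, IsProb (p x)) (n : ℕ) (x y : Ω) :
    0 ≤ pPow p n x y :=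
  pPow_eq_toReal p hp n x y ▸ ENNReal.toReal_nonneg

theorem ofReal_pPow [DecidableEq Ω] (hp : ∀ x, IsProb (p x)) (n : ℕ) (x y : Ω) :
    ENNReal.ofReal (pPow p n x y) =
      PnE (fun x y => ENNReal.ofReal (p x y)) n (fun w => if w = y then 1 else 0) x := by
  rw [pPow_eq_toReal p hp, ENNReal.ofReal_toReal (PnE_indicator_ne_top p hp n x y)]

end Real

theorem prod_range_mul_div_telescope {K : Type*} [Field K] (c b : ℕ → K) :
    ∀ n, (∀ t < n, ∏ s ∈ range t, c s ≠ 0 → b t = 0 → c t * b (t + 1) = 0) →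
      (∏ t ∈ range n, c t * b (t + 1) / b t) * b 0 = (∏ t ∈ range n, c t) * b n
  | 0, _ => by simp
  | n + 1, h => by
    have ih := prod_range_mul_div_telescope c b n fun t ht => h t (by omega)
    rw [prod_range_succ, prod_range_succ, mul_right_comm, ih]
    by_cases hc : ∏ t ∈ range n, c t = 0
    · simp [hc]
    by_cases hb : b n = 0
    · simp [hb, mul_assoc, h n n.lt_succ_self hc hb]
    · field_simp

section Path

variable {T : ℕ} (ω : Fin (T + 1) → Ω)

theorem extPath_of_lt {n : ℕ} (h : n < T + 1) : extPath ω n = ω ⟨n, h⟩ := dif_pos h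

theorem extPath_zero : extPath ω 0 = ω 0 := extPath_of_lt ω T.succ_pos

theorem extPath_last : extPath ω T = ω (Fin.last T) := extPath_of_lt ω T.lt_succ_self

theorem prod_range_extPath {M : Type*} [CommMonoid M] (F : Ω → Ω → M) :
    ∏ t ∈ range T, F (extPath ω t) (extPath ω (t + 1)) =
      ∏ i : Fin T, F (ω i.castSucc) (ω i.succ) := by
  rw [← Fin.prod_univ_eq_prod_range (fun t => F (extPath ω t) (extPath ω (t + 1)))]
  refine prod_congr rfl fun i _ => ?_
  rw [extPath_of_lt ω (by omega), extPath_of_lt ω (by omega)]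
  rfl

end Path

section Drift

variable [DecidableEq Ω] {p : Ω → Ω → ℝ} {ν : Ω → ℝ} {x₀ : Ω} {T : ℕ}

theorem pPow_mul_follmerDens (hpos : ∀ x, ν x ≠ 0 → 0 < pPow p T x₀ x) (z : Ω) :
    pPow p T x₀ z * follmerDens p ν x₀ T z = ν z := by
  by_cases hz : ν z = 0
  · simp [follmerDens, hz]
  · exact mul_div_cancel₀ _ (hpos z hz).ne'

theorem follmerDens_nonneg (hp : ∀ x, IsProb (p x)) (hν : IsProb ν) (z : Ω) :
    0 ≤ follmerDens p ν x₀ T z :=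
  div_nonneg (hν.1 z) (pPow_nonneg p hp T x₀ z)

theorem PnE_follmerDens (hp : ∀ x, IsProb (p x)) (hν : IsProb ν)
    (hpos : ∀ x, ν x ≠ 0 → 0 < pPow p T x₀ x) :
    PnE (fun x y => ENNReal.ofReal (p x y)) T
      (fun x => ENNReal.ofReal (follmerDens p ν x₀ T x)) x₀ = 1 := by
  rw [PnE_eq_tsum_mul]
  refine (tsum_congr fun z => ?_).trans (tsum_ofReal_eq_one hν)
  rw [← pPow_mul_follmerDens hpos z, ENNReal.ofReal_mul (pPow_nonneg p hp T x₀ z),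
    ofReal_pPow p hp]

theorem follmerPath_eq_pathLawB_mul (hp : ∀ x, IsProb (p x)) (hν : IsProb ν)
    (hpos : ∀ x, ν x ≠ 0 → 0 < pPow p T x₀ x) (ω : Fin (T + 1) → Ω) :
    follmerPath p ν x₀ T ω = pathLawB p x₀ T ω * follmerDens p ν x₀ T (ω (Fin.last T)) := by
  by_cases h0 : ω 0 = x₀
  swap
  · simp [follmerPath, pathLawB, h0]
  have hp0 : ∀ x y, 0 ≤ p x y := fun x => (hp x).1
  set f := follmerDens p ν x₀ T
  set σ := extPath ω
  have hσ0 : σ 0 = x₀ := (extPath_zero ω).trans h0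
  have hq : ∀ t ∈ range T, follmerQ p ν x₀ T (t + 1) (σ t) (σ (t + 1)) =
      p (σ t) (σ (t + 1)) * Pn p (T - (t + 1)) f (σ (t + 1)) / Pn p (T - t) f (σ t) := by
    intro t ht
    rw [follmerQ, show T - (t + 1) + 1 = T - t by have := mem_range.mp ht; omega]
  have hb0 : Pn p (T - 0) f (σ 0) = 1 := by
    rw [Nat.sub_zero, hσ0, Pn_eq_toReal p hp0 (follmerDens_nonneg hp hν) T x₀
      (by rw [PnE_follmerDens hp hν hpos]; exact ENNReal.one_ne_top),
      PnE_follmerDens hp hν hpos, ENNReal.toReal_one]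
  -- where a denominator `P_{T-t} f` vanishes (so `x / 0 = 0`), the next numerator vanishes too
  have hzero : ∀ t < T, ∏ s ∈ range t, p (σ s) (σ (s + 1)) ≠ 0 → Pn p (T - t) f (σ t) = 0 →
      p (σ t) (σ (t + 1)) * Pn p (T - (t + 1)) f (σ (t + 1)) = 0 := by
    intro t ht hc hb
    rw [show T - t = T - (t + 1) + 1 by omega] at hb
    refine mul_Pn_eq_zero_of_Pn_succ_eq_zero p hp0 (follmerDens_nonneg hp hν) ?_ hb _
    rw [show T - (t + 1) + 1 = T - t by omega]
    refine PnE_ne_top_of_prod_ne_zero _ ?_ ?_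
    · rw [← ENNReal.ofReal_prod_of_nonneg fun s _ => hp0 _ _, ENNReal.ofReal_ne_zero_iff]
      exact (prod_nonneg fun s _ => hp0 _ _).lt_of_ne' hc
    · rw [show t + (T - t) = T by omega, hσ0, PnE_follmerDens hp hν hpos]
      exact ENNReal.one_ne_top
  calc follmerPath p ν x₀ T ω
      = (∏ t ∈ range T, p (σ t) (σ (t + 1)) * Pn p (T - (t + 1)) f (σ (t + 1)) /
          Pn p (T - t) f (σ t)) * Pn p (T - 0) f (σ 0) := by
        rw [hb0, mul_one, ← prod_congr rfl hq]
        simp [follmerPath, h0, σ]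
    _ = (∏ t ∈ range T, p (σ t) (σ (t + 1))) * Pn p (T - T) f (σ T) :=
        prod_range_mul_div_telescope (fun t => p (σ t) (σ (t + 1)))
          (fun t => Pn p (T - t) f (σ t)) T hzero
    _ = pathLawB p x₀ T ω * f (ω (Fin.last T)) := by
        rw [Nat.sub_self, show σ T = ω (Fin.last T) from extPath_last ω]
        simp [pathLawB, h0, σ, Pn]

theorem tsum_ite_last_pathLawB (hp : ∀ x, IsProb (p x)) (y : Ω) :
    ∑' ω : Fin (T + 1) → Ω, (if ω (Fin.last T) = y then pathLawB p x₀ T ω else 0) =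
      pPow p T x₀ y := by
  have hterm : ∀ ω : Fin (T + 1) → Ω,
      (if ω (Fin.last T) = y then pathLawB p x₀ T ω else 0) =
        (if ω 0 = x₀ then (∏ i : Fin T, ENNReal.ofReal (p (ω i.castSucc) (ω i.succ))) *
          (if ω (Fin.last T) = y then 1 else 0) else 0).toReal := by
    intro ω
    simp only [pathLawB, prod_range_extPath]
    split_ifs <;> simp [ENNReal.toReal_prod, ENNReal.toReal_ofReal, (hp _).1]
  rw [tsum_congr hterm,
    ← ENNReal.tsum_toReal_eq fun ω => by split_ifs <;> simp [ENNReal.prod_ne_top],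
    tsum_ite_prod_mul (fun x y => ENNReal.ofReal (p x y)) (fun w => if w = y then 1 else 0),
    pPow_eq_toReal p hp]

end Drift

end Follmer

open Follmer in
theorem follmer_drift_representation_general {Ω : Type*} [DecidableEq Ω]
    (p : Ω → Ω → ℝ) (ν : Ω → ℝ) (x₀ : Ω) (T : ℕ)
    (hp : ∀ x, IsProb (p x)) (hν : IsProb ν)
    (hpos : ∀ x, ν x ≠ 0 → 0 < pPow p T x₀ x) :
    (∀ t, 1 ≤ t → t ≤ T → ∀ x : Ω,
        Pn p (T - t + 1) (follmerDens p ν x₀ T) x ≠ 0 →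
        HasSum (follmerQ p ν x₀ T t x) 1) ∧
    (∀ ω : Fin (T + 1) → Ω,
        follmerPath p ν x₀ T ω =
          pathLawB p x₀ T ω * follmerDens p ν x₀ T (ω (Fin.last T))) ∧
    (∀ y : Ω,
        (∑' ω : Fin (T + 1) → Ω,
          if ω (Fin.last T) = y then follmerPath p ν x₀ T ω else 0) = ν y) := by
  have hpath := follmerPath_eq_pathLawB_mul hp hν hpos
  refine ⟨fun t _ _ x hD => hasSum_div_tsum (a := fun y => p x y * Pn p (T - t) _ y) hD, hpath,
    fun y => ?_⟩
  calc (∑' ω : Fin (T + 1) → Ω, if ω (Fin.last T) = y then follmerPath p ν x₀ T ω else 0)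
      = ∑' ω : Fin (T + 1) → Ω, (if ω (Fin.last T) = y then pathLawB p x₀ T ω else 0) *
          follmerDens p ν x₀ T y :=
        tsum_congr fun ω => by split_ifs with h <;> simp [hpath, h]
    _ = pPow p T x₀ y * follmerDens p ν x₀ T y := by
        rw [tsum_mul_right, tsum_ite_last_pathLawB hp]
    _ = ν y := pPow_mul_follmerDens hpos y

/-- Föllmer drift representation: if `μ_T = p^T(x₀,·) > 0` on the
support of `ν`, the drift process is well-defined, its path law has density
`f(x_T) = (dν/dμ_T)(x_T)` with respect to the path law of `B`, and `X_T ∼ ν`. -/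
theorem follmer_drift_representation {Ω : Type*} [Countable Ω] [DecidableEq Ω]
    (p : Ω → Ω → ℝ) (ν : Ω → ℝ) (x₀ : Ω) (T : ℕ) (hT : 1 ≤ T)
    (hp : ∀ x, IsProb (p x)) (hν : IsProb ν)
    (hpos : ∀ x, ν x ≠ 0 → 0 < pPow p T x₀ x) :
    (∀ t, 1 ≤ t → t ≤ T → ∀ x : Ω,
        Pn p (T - t + 1) (follmerDens p ν x₀ T) x ≠ 0 →
        HasSum (follmerQ p ν x₀ T t x) 1) ∧
    (∀ ω : Fin (T + 1) → Ω,
        follmerPath p ν x₀ T ω =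
          pathLawB p x₀ T ω * follmerDens p ν x₀ T (ω (Fin.last T))) ∧
    (∀ y : Ω,
        (∑' ω : Fin (T + 1) → Ω,
          if ω (Fin.last T) = y then follmerPath p ν x₀ T ω else 0) = ν y) :=
  follmer_drift_representation_general p ν x₀ T hp hν hpos
end
end

section
/- With the Föllmer drift process {X_t}_{t=0}^T as above (the path law of X has density f(x_T) with respect to the path law of B, where f = dν/dμ_T), the relative entropy between the full trajectories equals the relative entropy between the endpoints: H( law(X₀,…,X_T) ‖ law(B₀,…,B_T) ) = E[log f(X_T)] = H(ν ‖ μ_T). -/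
open scoped BigOperators

noncomputable section

/-!
Along a path `ω` of positive `B`-probability, the normalisers `h_t = P_{T-t} f (ω_t)` satisfy
`h_0 = P_T f (x₀) = ∑ ν = 1` and `h_T = f(ω_T)`, so the product of the Föllmer transition
probabilities telescopes: the path law of `X` is the path law of `B` times `f(ω_T)`. This gives the
first identity pointwise, and shows that the endpoint `ω_T` of `X` has law `ν`, which gives the
second.
-/

open scoped ENNReal

section Pushforward

variable {α β : Type*} {w : α → ℝ} {m : β → ℝ} {φ : α → β}

theorem summable_and_tsum_mul_comp_eq_of_nonneg (hw : ∀ a, 0 ≤ w a) (hm : ∀ b, 0 ≤ m b)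
    (hpush : ∀ G : β → ℝ≥0∞,
      ∑' a, ENNReal.ofReal (w a) * G (φ a) = ∑' b, ENNReal.ofReal (m b) * G b)
    {g : β → ℝ} (hg : ∀ b, 0 ≤ g b) (hmg : Summable fun b => m b * g b) :
    (Summable fun a => w a * g (φ a)) ∧ ∑' a, w a * g (φ a) = ∑' b, m b * g b := by
  have hwg : ∀ a, 0 ≤ w a * g (φ a) := fun a => mul_nonneg (hw a) (hg _)
  have hE : ∑' a, ENNReal.ofReal (w a * g (φ a)) = ENNReal.ofReal (∑' b, m b * g b) := by
    rw [ENNReal.ofReal_tsum_of_nonneg (fun b => mul_nonneg (hm b) (hg b)) hmg]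
    simp only [ENNReal.ofReal_mul (hw _), ENNReal.ofReal_mul (hm _)]
    exact hpush fun b => ENNReal.ofReal (g b)
  have hsum : Summable fun a => w a * g (φ a) :=
    (ENNReal.summable_toReal (hE ▸ ENNReal.ofReal_ne_top)).congr fun a =>
      ENNReal.toReal_ofReal (hwg a)
  refine ⟨hsum, ?_⟩
  rw [← ENNReal.ofReal_eq_ofReal_iff (tsum_nonneg hwg)
    (tsum_nonneg fun b => mul_nonneg (hm b) (hg b)), ENNReal.ofReal_tsum_of_nonneg hwg hsum, hE]

theorem tsum_mul_comp_eq_of_pushforward (hw : ∀ a, 0 ≤ w a) (hm : ∀ b, 0 ≤ m b)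
    (hpush : ∀ G : β → ℝ≥0∞,
      ∑' a, ENNReal.ofReal (w a) * G (φ a) = ∑' b, ENNReal.ofReal (m b) * G b)
    {h : β → ℝ} (hh : Summable fun b => m b * |h b|) :
    ∑' a, w a * h (φ a) = ∑' b, m b * h b := by
  have hm_le : ∀ g : β → ℝ, (∀ b, 0 ≤ g b) → (∀ b, g b ≤ |h b|) →
      Summable fun b => m b * g b := fun g hg hgh =>
    hh.of_nonneg_of_le (fun b => mul_nonneg (hm b) (hg b))
      fun b => mul_le_mul_of_nonneg_left (hgh b) (hm b)
  have hmpos := hm_le (fun b => (h b)⁺) (fun b => posPart_nonneg _)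
    fun b => by rw [← posPart_add_negPart]; exact le_add_of_nonneg_right (negPart_nonneg _)
  have hmneg := hm_le (fun b => (h b)⁻) (fun b => negPart_nonneg _)
    fun b => by rw [← posPart_add_negPart]; exact le_add_of_nonneg_left (posPart_nonneg _)
  obtain ⟨hwpos, hpos_eq⟩ :=
    summable_and_tsum_mul_comp_eq_of_nonneg hw hm hpush (fun b => posPart_nonneg _) hmpos
  obtain ⟨hwneg, hneg_eq⟩ :=
    summable_and_tsum_mul_comp_eq_of_nonneg hw hm hpush (fun b => negPart_nonneg _) hmneg
  calc ∑' a, w a * h (φ a) = ∑' a, (w a * (h (φ a))⁺ - w a * (h (φ a))⁻) :=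
        tsum_congr fun a => by rw [← mul_sub, posPart_sub_negPart]
    _ = ∑' b, (m b * (h b)⁺ - m b * (h b)⁻) := by
        rw [hwpos.tsum_sub hwneg, hpos_eq, hneg_eq, hmpos.tsum_sub hmneg]
    _ = ∑' b, m b * h b := tsum_congr fun b => by rw [← mul_sub, posPart_sub_negPart]

end Pushforward

section MarkovChain

variable {Ω : Type*} {p : Ω → Ω → ℝ}

/- `Pn` and `pPow` are real `tsum`s, hence `0` wherever the series fails to converge; their
`ℝ≥0∞`-valued counterparts below are always meaningful and agree with them where finite. -/

def pE (p : Ω → Ω → ℝ) (x y : Ω) : ℝ≥0∞ := ENNReal.ofReal (p x y)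

def PnE (p : Ω → Ω → ℝ) : ℕ → (Ω → ℝ≥0∞) → Ω → ℝ≥0∞
  | 0, g => g
  | n + 1, g => fun x => ∑' y, pE p x y * PnE p n g y

theorem tsum_pE (hp : ∀ x, IsProb (p x)) (x : Ω) : ∑' y, pE p x y = 1 := by
  unfold pE
  rw [← ENNReal.ofReal_tsum_of_nonneg (hp x).1 (hp x).2.summable, (hp x).2.tsum_eq,
    ENNReal.ofReal_one]

theorem pE_mul_PnE_le (n : ℕ) (g : Ω → ℝ≥0∞) (x y : Ω) :
    pE p x y * PnE p n g y ≤ PnE p (n + 1) g x :=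
  ENNReal.le_tsum (f := fun y => pE p x y * PnE p n g y) y

theorem PnE_ne_zero_of_path {g : Ω → ℝ≥0∞} {n : ℕ} {ω : ℕ → Ω}
    (hstep : ∀ s < n, 0 < p (ω s) (ω (s + 1))) (hg : g (ω n) ≠ 0) : PnE p n g (ω 0) ≠ 0 := by
  induction n generalizing ω with
  | zero => exact hg
  | succ n ih =>
    have htail : PnE p n g (ω 1) ≠ 0 :=
      ih (ω := fun s => ω (s + 1)) (fun s hs => hstep (s + 1) (by omega)) hg
    refine ne_bot_of_le_ne_bot (mul_ne_zero ?_ htail) (pE_mul_PnE_le n g (ω 0) (ω 1))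
    exact (ENNReal.ofReal_pos.2 (hstep 0 n.succ_pos)).ne'

theorem PnE_ne_top_of_path {g : Ω → ℝ≥0∞} {m n : ℕ} {ω : ℕ → Ω}
    (hstep : ∀ s < m, 0 < p (ω s) (ω (s + 1))) (hfin : PnE p (m + n) g (ω 0) ≠ ⊤) :
    PnE p n g (ω m) ≠ ⊤ := by
  induction m generalizing ω with
  | zero => simpa using hfin
  | succ m ih =>
    refine ih (ω := fun s => ω (s + 1)) (fun s hs => hstep (s + 1) (by omega)) ?_
    rw [Nat.succ_add] at hfin
    refine (ENNReal.lt_top_of_mul_ne_top_right ?_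
      (ENNReal.ofReal_pos.2 (hstep 0 m.succ_pos)).ne').ne
    exact ne_top_of_le_ne_top hfin (pE_mul_PnE_le (m + n) g (ω 0) (ω 1))

theorem Pn_eq_toReal_PnE (hp0 : ∀ x y, 0 ≤ p x y) {f : Ω → ℝ} (hf : ∀ y, 0 ≤ f y) (n : ℕ)
    (x : Ω) (hfin : PnE p n (fun y => ENNReal.ofReal (f y)) x ≠ ⊤) :
    Pn p n f x = (PnE p n (fun y => ENNReal.ofReal (f y)) x).toReal := by
  induction n generalizing x with
  | zero => simp [Pn, PnE, ENNReal.toReal_ofReal (hf x)]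
  | succ n ih =>
    simp only [Pn, PnE] at hfin ⊢
    rw [ENNReal.tsum_toReal_eq (ENNReal.ne_top_of_tsum_ne_top hfin)]
    refine tsum_congr fun y => ?_
    rcases (hp0 x y).eq_or_lt with h0 | hpos
    · simp [pE, ← h0]
    · have hy : PnE p n (fun y => ENNReal.ofReal (f y)) y ≠ ⊤ :=
        (ENNReal.lt_top_of_mul_ne_top_right (ENNReal.ne_top_of_tsum_ne_top hfin y)
          (ENNReal.ofReal_pos.2 hpos).ne').ne
      rw [ENNReal.toReal_mul, pE, ENNReal.toReal_ofReal (hp0 x y), ih y hy]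

variable [DecidableEq Ω]

def pPowE (p : Ω → Ω → ℝ) : ℕ → Ω → Ω → ℝ≥0∞
  | 0 => fun x y => if x = y then 1 else 0
  | n + 1 => fun x y => ∑' z, pE p x z * pPowE p n z y

theorem tsum_pPowE (hp : ∀ x, IsProb (p x)) (n : ℕ) (x : Ω) : ∑' y, pPowE p n x y = 1 := by
  induction n generalizing x with
  | zero => simp [pPowE]
  | succ n ih =>
    simp only [pPowE]
    rw [ENNReal.tsum_comm]
    simp only [ENNReal.tsum_mul_left, ih, mul_one, tsum_pE hp]

theorem pPowE_ne_top (hp : ∀ x, IsProb (p x)) (n : ℕ) (x y : Ω) : pPowE p n x y ≠ ⊤ :=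
  ENNReal.ne_top_of_tsum_ne_top (tsum_pPowE hp n x ▸ ENNReal.one_ne_top) y

theorem pPow_eq_toReal (hp : ∀ x, IsProb (p x)) (n : ℕ) (x y : Ω) :
    pPow p n x y = (pPowE p n x y).toReal := by
  induction n generalizing x with
  | zero => by_cases h : x = y <;> simp [pPow, pPowE, h]
  | succ n ih =>
    simp only [pPow, pPowE]
    rw [ENNReal.tsum_toReal_eq (f := fun z => pE p x z * pPowE p n z y) fun z =>
      ENNReal.mul_ne_top ENNReal.ofReal_ne_top (pPowE_ne_top hp n z y)]
    exact tsum_congr fun z => by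
      rw [ENNReal.toReal_mul, ih, pE, ENNReal.toReal_ofReal ((hp x).1 z)]

theorem pPowE_eq_ofReal (hp : ∀ x, IsProb (p x)) (n : ℕ) (x y : Ω) :
    pPowE p n x y = ENNReal.ofReal (pPow p n x y) := by
  rw [pPow_eq_toReal hp, ENNReal.ofReal_toReal (pPowE_ne_top hp n x y)]

theorem pPow_nonneg (hp : ∀ x, IsProb (p x)) (n : ℕ) (x y : Ω) : 0 ≤ pPow p n x y := by
  rw [pPow_eq_toReal hp]
  exact ENNReal.toReal_nonneg

theorem PnE_eq_tsum (n : ℕ) (g : Ω → ℝ≥0∞) (x : Ω) :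
    PnE p n g x = ∑' y, pPowE p n x y * g y := by
  induction n generalizing x with
  | zero =>
    rw [PnE, tsum_eq_single x fun y hy => by simp [pPowE, Ne.symm hy]]
    simp [pPowE]
  | succ n ih =>
    simp only [PnE, pPowE, ih, ← ENNReal.tsum_mul_left, ← ENNReal.tsum_mul_right]
    rw [ENNReal.tsum_comm]
    exact tsum_congr fun y => tsum_congr fun z => (mul_assoc _ _ _).symm

end MarkovChain

section Paths

variable {Ω : Type*}

theorem extPath_of_lt {T : ℕ} (ω : Fin (T + 1) → Ω) {t : ℕ} (h : t < T + 1) :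
    extPath ω t = ω ⟨t, h⟩ :=
  dif_pos h

theorem extPath_zero {T : ℕ} (ω : Fin (T + 1) → Ω) : extPath ω 0 = ω 0 :=
  extPath_of_lt ω T.succ_pos

theorem extPath_last {T : ℕ} (ω : Fin (T + 1) → Ω) : extPath ω T = ω (Fin.last T) :=
  extPath_of_lt ω T.lt_succ_self

theorem extPath_cons_succ {n : ℕ} (x : Ω) (ω : Fin (n + 1) → Ω) (t : ℕ) :
    extPath (Fin.cons x ω : Fin (n + 2) → Ω) (t + 1) = extPath ω t := by
  by_cases h : t < n + 1
  · rw [extPath_of_lt _ (by omega), extPath_of_lt _ h]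
    exact Fin.cons_succ (α := fun _ => Ω) x ω ⟨t, h⟩
  · simp only [extPath, dif_neg h, dif_neg (show ¬t + 1 < n + 2 by omega), Fin.cons_last]

variable [DecidableEq Ω] {p : Ω → Ω → ℝ}

theorem pathLawB_nonneg (hp0 : ∀ x y, 0 ≤ p x y) (x : Ω) (n : ℕ) (ω : Fin (n + 1) → Ω) :
    0 ≤ pathLawB p x n ω :=
  mul_nonneg (by split_ifs <;> norm_num) (Finset.prod_nonneg fun _ _ => hp0 _ _)

theorem pathLawB_cons (x y : Ω) (n : ℕ) (ω : Fin (n + 1) → Ω) :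
    pathLawB p x (n + 1) (Fin.cons y ω) =
      (if y = x then 1 else 0) * (p y (ω 0) * pathLawB p (ω 0) n ω) := by
  simp only [pathLawB, Finset.prod_range_succ' _ n, extPath_cons_succ, Fin.cons_zero,
    extPath_zero, if_true, one_mul]
  ring

theorem pathLawB_eq_zero_of_ne {x : Ω} {n : ℕ} {ω : Fin (n + 1) → Ω} (h : ω 0 ≠ x) :
    pathLawB p x n ω = 0 := by
  simp [pathLawB, h]

theorem tsum_ofReal_pathLawB_mul (hp0 : ∀ x y, 0 ≤ p x y) (n : ℕ) (g : Ω → ℝ≥0∞) (x : Ω) :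
    ∑' ω : Fin (n + 1) → Ω, ENNReal.ofReal (pathLawB p x n ω) * g (ω (Fin.last n)) =
      PnE p n g x := by
  induction n generalizing x with
  | zero =>
    rw [← (Equiv.funUnique (Fin 1) Ω).symm.tsum_eq,
      tsum_eq_single x fun y hy => by
        rw [pathLawB_eq_zero_of_ne (by simpa using hy)]; simp]
    simp [pathLawB, PnE]
  | succ n ih =>
    have hcons : ∀ F : (Fin (n + 2) → Ω) → ℝ≥0∞,
        ∑' ω, F ω = ∑' y, ∑' ω : Fin (n + 1) → Ω, F (Fin.cons y ω) := fun F => by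
      rw [← (Fin.consEquiv fun _ => Ω).tsum_eq, ENNReal.tsum_prod']
      rfl
    rw [hcons, tsum_eq_single x fun y hy => by simp [pathLawB_cons, hy]]
    simp only [pathLawB_cons, if_true, one_mul, Fin.cons_last, ENNReal.ofReal_mul (hp0 _ _)]
    calc ∑' ω : Fin (n + 1) → Ω,
          pE p x (ω 0) * ENNReal.ofReal (pathLawB p (ω 0) n ω) * g (ω (Fin.last n))
        = ∑' ω : Fin (n + 1) → Ω, ∑' y,
            pE p x y * (ENNReal.ofReal (pathLawB p y n ω) * g (ω (Fin.last n))) :=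
          tsum_congr fun ω => by
            rw [tsum_eq_single (ω 0) fun y hy => by simp [pathLawB_eq_zero_of_ne (Ne.symm hy)],
              mul_assoc]
      _ = PnE p (n + 1) g x := by
          rw [ENNReal.tsum_comm]
          simp only [ENNReal.tsum_mul_left, ih, PnE]

end Paths

theorem eq_mul_prod_range_div_of_ne_zero {G₀ : Type*} [CommGroupWithZero G₀] (a : ℕ → G₀)
    {n : ℕ} (ha : ∀ t < n, a t ≠ 0) : a n = a 0 * ∏ t ∈ Finset.range n, a (t + 1) / a t := by
  induction n with
  | zero => simp
  | succ n ih =>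
    rw [Finset.prod_range_succ, ← mul_assoc, ← ih fun t ht => ha t (by omega),
      mul_div_cancel₀ _ (ha n n.lt_succ_self)]

section Follmer

variable {Ω : Type*} [DecidableEq Ω] {p : Ω → Ω → ℝ} {ν : Ω → ℝ} {x₀ : Ω} {T : ℕ}

theorem follmerDens_nonneg (hp : ∀ x, IsProb (p x)) (hν : IsProb ν) (y : Ω) :
    0 ≤ follmerDens p ν x₀ T y :=
  div_nonneg (hν.1 y) (pPow_nonneg hp T x₀ y)

theorem pPow_mul_follmerDens (hpos : ∀ x, ν x ≠ 0 → 0 < pPow p T x₀ x) (y : Ω) :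
    pPow p T x₀ y * follmerDens p ν x₀ T y = ν y := by
  by_cases hν0 : ν y = 0
  · simp [follmerDens, hν0]
  · exact mul_div_cancel₀ _ (hpos y hν0).ne'

theorem pPowE_mul_follmerDens (hp : ∀ x, IsProb (p x)) (hpos : ∀ x, ν x ≠ 0 → 0 < pPow p T x₀ x)
    (y : Ω) :
    pPowE p T x₀ y * ENNReal.ofReal (follmerDens p ν x₀ T y) = ENNReal.ofReal (ν y) := by
  rw [pPowE_eq_ofReal hp, ← ENNReal.ofReal_mul (pPow_nonneg hp T x₀ y),
    pPow_mul_follmerDens hpos]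

theorem PnE_follmerDens_eq_one (hp : ∀ x, IsProb (p x)) (hν : IsProb ν)
    (hpos : ∀ x, ν x ≠ 0 → 0 < pPow p T x₀ x) :
    PnE p T (fun y => ENNReal.ofReal (follmerDens p ν x₀ T y)) x₀ = 1 := by
  simp only [PnE_eq_tsum, pPowE_mul_follmerDens hp hpos]
  rw [← ENNReal.ofReal_tsum_of_nonneg hν.1 hν.2.summable, hν.2.tsum_eq, ENNReal.ofReal_one]

theorem Pn_follmerDens_pos_of_path (hp : ∀ x, IsProb (p x)) (hν : IsProb ν)
    (hpos : ∀ x, ν x ≠ 0 → 0 < pPow p T x₀ x) {ω : ℕ → Ω} (hω0 : ω 0 = x₀)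
    (hstep : ∀ s < T, 0 < p (ω s) (ω (s + 1))) (hfT : 0 < follmerDens p ν x₀ T (ω T))
    {t : ℕ} (ht : t ≤ T) : 0 < Pn p (T - t) (follmerDens p ν x₀ T) (ω t) := by
  set F : Ω → ℝ≥0∞ := fun y => ENNReal.ofReal (follmerDens p ν x₀ T y)
  have hfin : PnE p (T - t) F (ω t) ≠ ⊤ := by
    refine PnE_ne_top_of_path (fun s hs => hstep s (by omega)) ?_
    rw [Nat.add_sub_cancel' ht, hω0, PnE_follmerDens_eq_one hp hν hpos]
    exact ENNReal.one_ne_top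
  have hne : PnE p (T - t) F (ω t) ≠ 0 := by
    have := PnE_ne_zero_of_path (p := p) (g := F) (n := T - t) (ω := fun s => ω (t + s))
      (fun s hs => hstep (t + s) (by omega))
      (by simpa [F, Nat.add_sub_cancel' ht] using hfT)
    simpa using this
  rw [Pn_eq_toReal_PnE (fun x => (hp x).1) (follmerDens_nonneg hp hν) _ _ hfin]
  exact ENNReal.toReal_pos hne hfin

theorem Pn_follmerDens_eq_one (hp : ∀ x, IsProb (p x)) (hν : IsProb ν)
    (hpos : ∀ x, ν x ≠ 0 → 0 < pPow p T x₀ x) : Pn p T (follmerDens p ν x₀ T) x₀ = 1 := by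
  have h1 := PnE_follmerDens_eq_one hp hν hpos
  rw [Pn_eq_toReal_PnE (fun x => (hp x).1) (follmerDens_nonneg hp hν) _ _
    (h1 ▸ ENNReal.one_ne_top), h1, ENNReal.toReal_one]

theorem follmerPath_eq_pathLawB_mul (hT : 1 ≤ T) (hp : ∀ x, IsProb (p x)) (hν : IsProb ν)
    (hpos : ∀ x, ν x ≠ 0 → 0 < pPow p T x₀ x) (ω : Fin (T + 1) → Ω) :
    follmerPath p ν x₀ T ω = pathLawB p x₀ T ω * follmerDens p ν x₀ T (ω (Fin.last T)) := by
  rw [← extPath_last ω]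
  simp only [follmerPath, pathLawB]
  set f := follmerDens p ν x₀ T
  set W : ℕ → Ω := extPath ω
  by_cases h0 : ω 0 = x₀
  swap
  · simp [h0]
  rw [if_pos h0, one_mul, one_mul]
  by_cases hstep : ∃ t ∈ Finset.range T, p (W t) (W (t + 1)) = 0
  · obtain ⟨t, ht, hz⟩ := hstep
    rw [Finset.prod_eq_zero ht (by simp [follmerQ, W, hz]), Finset.prod_eq_zero ht hz, zero_mul]
  push Not at hstep
  rcases (show 0 ≤ f (W T) from follmerDens_nonneg hp hν _).eq_or_lt with hfT | hfT
  · rw [← hfT, mul_zero]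
    refine Finset.prod_eq_zero (Finset.mem_range.2 (Nat.sub_lt hT one_pos)) ?_
    rw [follmerQ, Nat.sub_add_cancel hT, Nat.sub_self]
    change p _ _ * f (W T) / _ = 0
    rw [← hfT, mul_zero, zero_div]
  set a : ℕ → ℝ := fun t => Pn p (T - t) f (W t)
  have ha : ∀ t ≤ T, 0 < a t := fun t ht =>
    Pn_follmerDens_pos_of_path hp hν hpos (by simp [W, extPath_zero, h0])
      (fun s hs => ((hp _).1 _).lt_of_ne' (hstep s (Finset.mem_range.2 hs))) hfT ht
  have hq : ∀ t ∈ Finset.range T,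
      follmerQ p ν x₀ T (t + 1) (W t) (W (t + 1)) = p (W t) (W (t + 1)) * (a (t + 1) / a t) :=
    fun t ht => by
      rw [follmerQ, show T - (t + 1) + 1 = T - t by have := Finset.mem_range.1 ht; omega,
        mul_div_assoc]
  have hprod : a T = a 0 * ∏ t ∈ Finset.range T, a (t + 1) / a t :=
    eq_mul_prod_range_div_of_ne_zero a fun t ht => (ha t ht.le).ne'
  have ha0 : a 0 = 1 := by simp [a, W, extPath_zero, h0, f, Pn_follmerDens_eq_one hp hν hpos]
  rw [Finset.prod_congr rfl hq, Finset.prod_mul_distrib, ← one_mul (∏ t ∈ _, a (t + 1) / a t),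
    ← ha0, ← hprod]
  simp [a, Pn]

theorem tsum_ofReal_follmerPath_mul (hT : 1 ≤ T) (hp : ∀ x, IsProb (p x)) (hν : IsProb ν)
    (hpos : ∀ x, ν x ≠ 0 → 0 < pPow p T x₀ x) (G : Ω → ℝ≥0∞) :
    ∑' ω : Fin (T + 1) → Ω, ENNReal.ofReal (follmerPath p ν x₀ T ω) * G (ω (Fin.last T)) =
      ∑' y, ENNReal.ofReal (ν y) * G y := by
  set F : Ω → ℝ≥0∞ := fun y => ENNReal.ofReal (follmerDens p ν x₀ T y)
  have hp0 : ∀ x y, 0 ≤ p x y := fun x => (hp x).1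
  calc ∑' ω : Fin (T + 1) → Ω, ENNReal.ofReal (follmerPath p ν x₀ T ω) * G (ω (Fin.last T))
      = ∑' ω : Fin (T + 1) → Ω,
          ENNReal.ofReal (pathLawB p x₀ T ω) * (F (ω (Fin.last T)) * G (ω (Fin.last T))) := by
        simp only [follmerPath_eq_pathLawB_mul hT hp hν hpos,
          ENNReal.ofReal_mul (pathLawB_nonneg hp0 _ _ _), mul_assoc, F]
    _ = ∑' y, pPowE p T x₀ y * (F y * G y) :=
        (tsum_ofReal_pathLawB_mul hp0 T (fun y => F y * G y) x₀).trans (PnE_eq_tsum T _ x₀)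
    _ = ∑' y, ENNReal.ofReal (ν y) * G y := by
        simp only [← mul_assoc, F, pPowE_mul_follmerDens hp hpos]

end Follmer

theorem follmer_entropy_identity_general {Ω : Type*} [DecidableEq Ω]
    (p : Ω → Ω → ℝ) (ν : Ω → ℝ) (x₀ : Ω) (T : ℕ) (hT : 1 ≤ T)
    (hp : ∀ x, IsProb (p x)) (hν : IsProb ν)
    (hpos : ∀ x, ν x ≠ 0 → 0 < pPow p T x₀ x)
    (hent : Summable (fun y => ν y * |Real.log (ν y / pPow p T x₀ y)|)) :
    relent (follmerPath p ν x₀ T) (pathLawB p x₀ T) =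
      (∑' ω : Fin (T + 1) → Ω,
        follmerPath p ν x₀ T ω * Real.log (follmerDens p ν x₀ T (ω (Fin.last T)))) ∧
    (∑' ω : Fin (T + 1) → Ω,
        follmerPath p ν x₀ T ω * Real.log (follmerDens p ν x₀ T (ω (Fin.last T)))) =
      relent ν (pPow p T x₀) := by
  have hp0 : ∀ x y, 0 ≤ p x y := fun x => (hp x).1
  have hX := follmerPath_eq_pathLawB_mul hT hp hν hpos
  refine ⟨tsum_congr fun ω => ?_, ?_⟩
  · rcases eq_or_ne (pathLawB p x₀ T ω) 0 with hB | hB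
    · simp [hX ω, hB]
    · rw [hX ω, mul_div_cancel_left₀ _ hB]
  exact tsum_mul_comp_eq_of_pushforward
    (fun ω => hX ω ▸ mul_nonneg (pathLawB_nonneg hp0 _ _ _) (follmerDens_nonneg hp hν _))
    hν.1 (tsum_ofReal_follmerPath_mul hT hp hν hpos) hent

/-- for the Föllmer drift process, the relative entropy between the
trajectories equals `E[log f(X_T)]`, which equals the relative entropy between
the endpoint laws: `H(law(X₀,…,X_T) ‖ law(B₀,…,B_T)) = E[log f(X_T)] = H(ν ‖ μ_T)`. -/
theorem follmer_entropy_identity {Ω : Type*} [Countable Ω] [DecidableEq Ω]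
    (p : Ω → Ω → ℝ) (ν : Ω → ℝ) (x₀ : Ω) (T : ℕ) (hT : 1 ≤ T)
    (hp : ∀ x, IsProb (p x)) (hν : IsProb ν)
    (hpos : ∀ x, ν x ≠ 0 → 0 < pPow p T x₀ x)
    (hent : Summable (fun y => ν y * |Real.log (ν y / pPow p T x₀ y)|)) :
    relent (follmerPath p ν x₀ T) (pathLawB p x₀ T) =
      (∑' ω : Fin (T + 1) → Ω,
        follmerPath p ν x₀ T ω * Real.log (follmerDens p ν x₀ T (ω (Fin.last T)))) ∧
    (∑' ω : Fin (T + 1) → Ω,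
        follmerPath p ν x₀ T ω * Real.log (follmerDens p ν x₀ T (ω (Fin.last T)))) =
      relent ν (pPow p T x₀) :=
  follmer_entropy_identity_general p ν x₀ T hT hp hν hpos hent
end
end
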